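/- arXiv:2511.10813 — 2 statements merged into one kernel-verified Lean document; each statement's English description precedes it below -/
import Mathlib

section
/- Let M be an m×r integer matrix (m ≥ 2) whose m-th row is the zero row, and let M' be the (m−1)×r matrix obtained from M by deleting that zero row. Suppose the standardized abelian Cayley graph of M' has no loops. Then the chromatic number of the standardized abelian Cayley graph of M equals the chromatic number of the standardized abelian Cayley graph of M'. -/
/-- The subgroup of `ι → ℤ` generated by the columns of `M`. -/
def colSubgroup {ι κ : Type*} (M : Matrix ι κ ℤ) : AddSubgroup (ι → ℤ) :=
  AddSubgroup.closure (Set.range fun j => fun i => M i j)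

/-- The standardized abelian Cayley graph of an integer matrix `M`. -/
def SACG {ι κ : Type*} [DecidableEq ι] (M : Matrix ι κ ℤ) :
    SimpleGraph ((ι → ℤ) ⧸ colSubgroup M) where
  Adj x y := x ≠ y ∧ ∃ i : ι,
    x - y = QuotientAddGroup.mk (Pi.single i 1) ∨
    x - y = -QuotientAddGroup.mk (Pi.single i 1)
  symm := by
    constructor
    rintro x y ⟨hne, i, h | h⟩
    · exact ⟨hne.symm, i, Or.inr (by rw [← neg_sub, h])⟩
    · exact ⟨hne.symm, i, Or.inl (by rw [← neg_sub, h, neg_neg])⟩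
  loopless := ⟨fun x h => h.1 rfl⟩

/-- The SACG of `M` has no loops: no standard basis vector lies in the
column subgroup. -/
def NoLoops {ι κ : Type*} [DecidableEq ι] (M : Matrix ι κ ℤ) : Prop :=
  ∀ i : ι, (Pi.single i 1 : ι → ℤ) ∉ colSubgroup M

/-!
Write `M'` for `M` with its zero last row deleted and `H`, `H'` for the column subgroups. Since the
last coordinate of every column of `M` vanishes, `ℤ^(m+2) ⧸ H ≅ (ℤ^(m+1) ⧸ H') × ℤ`, and under this
isomorphism `SACG M` is the Cartesian product of `SACG M'` with the two-way infinite path. Extension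
by zero embeds `SACG M'` into `SACG M`. Conversely, a colouring `c` of `SACG M'` by an abelian group
gives the colouring `(x, t) ↦ c x + t • a` of `SACG M` for any `a ≠ 0`, and `a` exists as soon as
there are at least two colours, which is forced by the edge `0 — e₀` of the loopless `SACG M'`.
-/

open QuotientAddGroup SimpleGraph

variable {ι κ : Type*}

lemma colSubgroup_le_iff {M : Matrix ι κ ℤ} {K : AddSubgroup (ι → ℤ)} :
    colSubgroup M ≤ K ↔ ∀ j, (fun i => M i j) ∈ K := by
  rw [colSubgroup, AddSubgroup.closure_le, Set.range_subset_iff]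
  rfl

lemma col_mem_colSubgroup (M : Matrix ι κ ℤ) (j : κ) : (fun i => M i j) ∈ colSubgroup M :=
  AddSubgroup.subset_closure ⟨j, rfl⟩

section Graph

variable [DecidableEq ι] {M : Matrix ι κ ℤ}

lemma NoLoops.sacg_adj_of_sub_eq (hM : NoLoops M) {x y : (ι → ℤ) ⧸ colSubgroup M} {i : ι}
    (h : x - y = mk (Pi.single i 1)) : (SACG M).Adj x y := by
  refine ⟨fun hxy => hM i ?_, i, Or.inl h⟩
  rw [← QuotientAddGroup.eq_zero_iff, ← h, hxy, sub_self]

def sacgHomOfInjective {ι' κ' : Type*} [DecidableEq ι'] {M' : Matrix ι' κ' ℤ}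
    (f : (ι' → ℤ) ⧸ colSubgroup M' →+ (ι → ℤ) ⧸ colSubgroup M) (hf : Function.Injective f)
    (σ : ι' → ι) (hσ : ∀ i, f (mk (Pi.single i 1)) = mk (Pi.single (σ i) 1)) :
    SACG M' →g SACG M where
  toFun := f
  map_rel' := by
    rintro x y ⟨hxy, i, h | h⟩
    · exact ⟨hf.ne hxy, σ i, Or.inl (by rw [← map_sub, h, hσ])⟩
    · exact ⟨hf.ne hxy, σ i, Or.inr (by rw [← map_sub, h, map_neg, hσ])⟩

end Graph

section DeleteZeroRow

variable {n : ℕ} (M : Matrix (Fin (n + 1)) κ ℤ)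

def initQuot :
    (Fin (n + 1) → ℤ) ⧸ colSubgroup M →+ (Fin n → ℤ) ⧸ colSubgroup (M.submatrix Fin.castSucc id) :=
  map _ _ (LinearMap.funLeft ℤ ℤ Fin.castSucc).toAddMonoidHom <|
    colSubgroup_le_iff.2 (col_mem_colSubgroup _)

variable {M}

noncomputable def snocQuot (hzero : ∀ j, M (Fin.last n) j = 0) :
    (Fin n → ℤ) ⧸ colSubgroup (M.submatrix Fin.castSucc id) →+ (Fin (n + 1) → ℤ) ⧸ colSubgroup M :=
  map _ _ (Function.ExtendByZero.hom ℤ Fin.castSucc) <| colSubgroup_le_iff.2 fun j => by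
    show Function.ExtendByZero.hom ℤ Fin.castSucc _ ∈ colSubgroup M
    convert col_mem_colSubgroup M j using 1
    funext i
    induction i using Fin.lastCases with
    | last => simp [Function.extend_apply', Fin.castSucc_ne_last, hzero]
    | cast i => simp [(Fin.castSucc_injective n).extend_apply]

def lastQuot (hzero : ∀ j, M (Fin.last n) j = 0) : (Fin (n + 1) → ℤ) ⧸ colSubgroup M →+ ℤ :=
  lift _ (Pi.evalAddMonoidHom _ (Fin.last n)) <| colSubgroup_le_iff.2 fun j => hzero j

lemma initQuot_mk_single_castSucc (i : Fin n) :
    initQuot M (mk (Pi.single i.castSucc 1)) = mk (Pi.single i 1) := by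
  rw [initQuot, map_mk]
  congr 1
  funext a
  simp [Pi.single_apply, Fin.castSucc_inj]

lemma initQuot_mk_single_last : initQuot M (mk (Pi.single (Fin.last n) 1)) = 0 := by
  rw [initQuot, map_mk, ← mk_zero]
  congr 1
  funext a
  simp [Fin.castSucc_ne_last]

variable (hzero : ∀ j, M (Fin.last n) j = 0)

lemma snocQuot_mk_single (i : Fin n) :
    snocQuot hzero (mk (Pi.single i 1)) = mk (Pi.single i.castSucc 1) := by
  rw [snocQuot, map_mk]
  congr 1
  funext a
  induction a using Fin.lastCases with
  | last => simp [Function.extend_apply', Fin.castSucc_ne_last]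
  | cast a => simp [(Fin.castSucc_injective n).extend_apply, Pi.single_apply, Fin.castSucc_inj]

lemma initQuot_snocQuot (x : (Fin n → ℤ) ⧸ colSubgroup (M.submatrix Fin.castSucc id)) :
    initQuot M (snocQuot hzero x) = x := by
  induction x using QuotientAddGroup.induction_on with
  | H v =>
    rw [snocQuot, initQuot, map_mk, map_mk]
    congr 1
    funext a
    simp [(Fin.castSucc_injective n).extend_apply]

lemma snocQuot_injective : Function.Injective (snocQuot hzero) :=
  Function.LeftInverse.injective (initQuot_snocQuot hzero)

lemma lastQuot_mk_single_castSucc (i : Fin n) :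
    lastQuot hzero (mk (Pi.single i.castSucc 1)) = 0 := by
  simp [lastQuot, Fin.castSucc_ne_last]

lemma lastQuot_mk_single_last : lastQuot hzero (mk (Pi.single (Fin.last n) 1)) = 1 := by
  simp [lastQuot]

def sacgColoringOfSubmatrixCastSucc (hloops : NoLoops (M.submatrix Fin.castSucc id)) {A : Type*}
    [AddCommGroup A] (C : (SACG (M.submatrix Fin.castSucc id)).Coloring A) {a : A} (ha : a ≠ 0) :
    (SACG M).Coloring A :=
  Coloring.mk (fun x => C (initQuot M x) + lastQuot hzero x • a) <| by
    suffices h : ∀ {x y} {i : Fin (n + 1)}, x - y = mk (Pi.single i 1) →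
        C (initQuot M x) + lastQuot hzero x • a ≠ C (initQuot M y) + lastQuot hzero y • a by
      rintro x y ⟨-, i, hxy | hxy⟩
      · exact h hxy
      · exact (h (by rw [← neg_sub, hxy, neg_neg])).symm
    intro x y i hxy
    have hinit := congrArg (initQuot M) hxy
    have hlast := congrArg (lastQuot hzero) hxy
    rw [map_sub] at hinit hlast
    induction i using Fin.lastCases with
    | last =>
      rw [initQuot_mk_single_last, sub_eq_zero] at hinit
      rw [lastQuot_mk_single_last, sub_eq_iff_eq_add] at hlast
      rw [hinit, hlast, add_smul, one_smul, Ne, add_right_inj, add_eq_right]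
      exact ha
    | cast i =>
      rw [initQuot_mk_single_castSucc] at hinit
      rw [lastQuot_mk_single_castSucc, sub_eq_zero] at hlast
      rw [hlast, Ne, add_left_inj]
      exact C.valid (hloops.sacg_adj_of_sub_eq hinit)

theorem colorable_of_colorable_submatrix_castSucc (hzero : ∀ j, M (Fin.last n) j = 0)
    (hloops : NoLoops (M.submatrix Fin.castSucc id))
    {N : ℕ} (hN : 2 ≤ N) (hcol : (SACG (M.submatrix Fin.castSucc id)).Colorable N) :
    (SACG M).Colorable N := by
  have : NeZero N := ⟨by omega⟩
  have : Nontrivial (Fin N) := Fin.nontrivial_iff_two_le.2 hN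
  obtain ⟨a, ha⟩ := exists_ne (0 : Fin N)
  exact ⟨sacgColoringOfSubmatrixCastSucc hzero hloops hcol.some ha⟩

end DeleteZeroRow

theorem chromatic_number_delete_zero_row (m r : ℕ) (M : Matrix (Fin (m + 2)) (Fin r) ℤ)
    (hzero : ∀ j, M (Fin.last (m + 1)) j = 0)
    (M' : Matrix (Fin (m + 1)) (Fin r) ℤ)
    (hM' : ∀ i j, M' i j = M i.castSucc j)
    (hloops : NoLoops M') :
    (SACG M).chromaticNumber = (SACG M').chromaticNumber := by
  obtain rfl : M' = M.submatrix Fin.castSucc id := Matrix.ext hM'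
  refine le_antisymm (chromaticNumber_le_of_forall_imp fun N hN => ?_) <|
    chromaticNumber_mono_of_hom <|
      sacgHomOfInjective _ (snocQuot_injective hzero) _ (snocQuot_mk_single hzero)
  have hedge := hloops.sacg_adj_of_sub_eq (x := mk (Pi.single 0 1)) (sub_zero _)
  have h2 : (2 : ℕ∞) ≤ N := (two_le_chromaticNumber_of_adj hedge).trans hN.chromaticNumber_le
  exact colorable_of_colorable_submatrix_castSucc hzero hloops (by exact_mod_cast h2) hN
end

section
/- (Three-Divisible Row Lemma) Let k₁, k₂, y₂₁, y₂₂, y₃₁, y₃₂ be integers and let M be the 3×2 integer matrix with rows (3k₁, 3k₂), (y₂₁, y₂₂), (y₃₁, y₃₂). Suppose M has no zero rows and the standardized abelian Cayley graph X of M has no loops. Then the chromatic number of X is at most 3. -/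
/-!
A homomorphism `χ : ℤ³ → ℚ/ℤ` that vanishes on the column subgroup `H` and sends every standard
basis vector into the closed middle third `[1/3, 2/3]` yields a proper 3-colouring of the SACG:
colour `x + H` by the third of `[0, 1)` containing `χ x`; neighbours differ by `±χ(eᵢ)`, which is
at distance at least `1/3` from `0`.

To build `χ`, take a rational vector `w ≠ 0` orthogonal to both columns. As the first row of `M`
is nonzero, `w` is nonzero at the second or third coordinate. If it is nonzero at both, a rational
multiple `t • w` works there (the lonely runner problem for two speeds). If it vanishes at one of
them, say at `e₂`, then `e₂ ∉ H` gives a character of `ℤ³/H` (as `ℚ/ℤ` is injective) whose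
multiple lies in the middle third at `e₂`, and adding a multiple of `w` corrects the value at
`e₃`. Finally, as the first row is divisible by `3`, the character `x ↦ j x₁ / 3` vanishes on `H`,
and adding it for a suitable `j` moves the value at `e₁` into the middle third.
-/

open Set

def middleThird : Set (AddCircle (1 : ℚ)) := (↑) '' Icc (1 / 3 : ℚ) (2 / 3)

lemma coe_eq_zero_iff_exists_int {r : ℚ} : (r : AddCircle (1 : ℚ)) = 0 ↔ ∃ n : ℤ, r = n := by
  rw [AddCircle.coe_eq_zero_iff]
  simp [eq_comm]

lemma neg_mem_middleThird {x : AddCircle (1 : ℚ)} (hx : x ∈ middleThird) : -x ∈ middleThird := by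
  obtain ⟨r, ⟨h₁, h₂⟩, rfl⟩ := hx
  refine ⟨1 - r, ⟨by linarith, by linarith⟩, ?_⟩
  rw [AddCircle.coe_sub, AddCircle.coe_period, zero_sub]

lemma neg_mem_middleThird_iff {x : AddCircle (1 : ℚ)} : -x ∈ middleThird ↔ x ∈ middleThird :=
  ⟨fun h => neg_neg x ▸ neg_mem_middleThird h, neg_mem_middleThird⟩

/-- If `x = a / n` in lowest terms, a Bézout multiple of `x` is `⌈n / 3⌉ / n`. -/
lemma exists_zsmul_mem_middleThird {x : AddCircle (1 : ℚ)} (hx : x ≠ 0) :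
    ∃ m : ℤ, m • x ∈ middleThird := by
  obtain ⟨q, rfl⟩ := QuotientAddGroup.mk_surjective x
  set n : ℤ := (q.den : ℤ) with hn_def
  have hn : 2 ≤ n := by
    by_contra! h
    have hden : q.den = 1 := by have := q.pos; omega
    exact hx (coe_eq_zero_iff_exists_int.2 ⟨q.num, by simpa [hden] using (Rat.num_div_den q).symm⟩)
  have hq : q = q.num / n := (Rat.num_div_den q).symm
  obtain ⟨A, B, hbez⟩ : ∃ A B : ℤ, q.num * A + n * B = 1 :=
    ⟨_, _, by rw [← Int.gcd_eq_gcd_ab, Int.gcd, Int.natAbs_natCast, q.reduced, Nat.cast_one]⟩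
  set j : ℤ := (n + 2) / 3
  have hn' : (0 : ℚ) < n := by positivity
  refine ⟨j * A, ⟨j / n, ?_, ?_⟩⟩
  · have h₁ : ((n : ℤ) : ℚ) ≤ ((3 * j : ℤ) : ℚ) := Int.cast_le.2 (by omega)
    have h₂ : ((3 * j : ℤ) : ℚ) ≤ ((2 * n : ℤ) : ℚ) := Int.cast_le.2 (by omega)
    push_cast at h₁ h₂
    rw [mem_Icc, le_div_iff₀ hn', div_le_iff₀ hn']
    constructor <;> linarith
  · have key : ((j * A : ℤ) : ℚ) * q = j / n - (j * B : ℤ) := by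
      have hbez' := congrArg (Int.cast : ℤ → ℚ) hbez
      push_cast at hbez' ⊢
      rw [hq]
      field_simp
      linear_combination j * hbez'
    have hint : (((j * B : ℤ) : ℚ) : AddCircle (1 : ℚ)) = 0 :=
      coe_eq_zero_iff_exists_int.2 ⟨_, rfl⟩
    rw [← AddCircle.coe_zsmul, zsmul_eq_mul, key, AddCircle.coe_sub, hint, sub_zero]

/-- With `t = m / (p + q)` the numbers `t * p` and `t * q` add up to the integer `m`, so they are
opposite in `ℚ/ℤ`. -/
lemma exists_mul_mem_middleThird_of_pos {p q : ℚ} (hp : 0 < p) (hq : 0 < q) :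
    ∃ t : ℚ, ((t * p : ℚ) : AddCircle (1 : ℚ)) ∈ middleThird ∧
      ((t * q : ℚ) : AddCircle (1 : ℚ)) ∈ middleThird := by
  set x : AddCircle (1 : ℚ) := ((p / (p + q) : ℚ) : AddCircle (1 : ℚ))
  have hx : x ≠ 0 := by
    intro hx
    obtain ⟨n, hn⟩ := coe_eq_zero_iff_exists_int.1 hx
    have h₀ : (0 : ℚ) < n := hn ▸ by positivity
    have h₁ : (n : ℚ) < 1 := hn ▸ (div_lt_one (by positivity)).2 (by linarith)
    have : 0 < n := by exact_mod_cast h₀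
    have : n < 1 := by exact_mod_cast h₁
    omega
  have hqx : ((q / (p + q) : ℚ) : AddCircle (1 : ℚ)) = -x := by
    rw [eq_neg_iff_add_eq_zero, ← AddCircle.coe_add, ← add_div, add_comm,
      div_self (by positivity), AddCircle.coe_period]
  obtain ⟨m, hm⟩ := exists_zsmul_mem_middleThird hx
  refine ⟨m / (p + q), ?_, ?_⟩
  · rwa [div_mul_comm, mul_comm, ← zsmul_eq_mul, AddCircle.coe_zsmul]
  · rw [div_mul_comm, mul_comm, ← zsmul_eq_mul, AddCircle.coe_zsmul, hqx, zsmul_neg]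
    exact neg_mem_middleThird hm

lemma coe_mul_abs_mem_middleThird_iff {t p : ℚ} :
    ((t * |p| : ℚ) : AddCircle (1 : ℚ)) ∈ middleThird ↔
      ((t * p : ℚ) : AddCircle (1 : ℚ)) ∈ middleThird := by
  rcases abs_choice p with h | h <;> rw [h]
  rw [mul_neg, AddCircle.coe_neg, neg_mem_middleThird_iff]

lemma exists_mul_mem_middleThird {p q : ℚ} (hp : p ≠ 0) (hq : q ≠ 0) :
    ∃ t : ℚ, ((t * p : ℚ) : AddCircle (1 : ℚ)) ∈ middleThird ∧
      ((t * q : ℚ) : AddCircle (1 : ℚ)) ∈ middleThird := by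
  simpa only [coe_mul_abs_mem_middleThird_iff] using
    exists_mul_mem_middleThird_of_pos (abs_pos.2 hp) (abs_pos.2 hq)

lemma exists_add_intCast_div_three_mem_middleThird (x : AddCircle (1 : ℚ)) :
    ∃ j : ℤ, x + ((j / 3 : ℚ) : AddCircle (1 : ℚ)) ∈ middleThird := by
  obtain ⟨r, rfl⟩ := QuotientAddGroup.mk_surjective x
  refine ⟨1 - ⌊3 * r⌋, r + (1 - ⌊3 * r⌋ : ℤ) / 3, ?_, AddCircle.coe_add _ _ _⟩
  have h₁ := Int.floor_le (3 * r)
  have h₂ := Int.lt_floor_add_one (3 * r)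
  push_cast
  constructor <;> linarith

noncomputable def third (x : AddCircle (1 : ℚ)) : Fin 3 :=
  ⟨⌊3 * (AddCircle.equivIco 1 0 x : ℚ)⌋₊, by
    have := (AddCircle.equivIco 1 0 x).2
    rw [Nat.floor_lt (by linarith [this.1])]
    push_cast
    linarith [this.2]⟩

lemma third_ne_of_sub_mem_middleThird {x y : AddCircle (1 : ℚ)} (h : x - y ∈ middleThird) :
    third x ≠ third y := by
  intro hxy
  set r : ℚ := ↑(AddCircle.equivIco 1 0 x)
  set s : ℚ := ↑(AddCircle.equivIco 1 0 y)
  have hr := (AddCircle.equivIco 1 0 x).2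
  have hs := (AddCircle.equivIco 1 0 y).2
  have hfloor : ⌊3 * r⌋₊ = ⌊3 * s⌋₊ := Fin.ext_iff.1 hxy
  have hr₁ := Nat.floor_le (a := 3 * r) (by linarith [hr.1])
  have hr₂ := Nat.lt_floor_add_one (3 * r)
  have hs₁ := Nat.floor_le (a := 3 * s) (by linarith [hs.1])
  have hs₂ := Nat.lt_floor_add_one (3 * s)
  rw [hfloor] at hr₁ hr₂
  obtain ⟨u, ⟨hu₁, hu₂⟩, hu⟩ := h
  rw [← AddCircle.coe_equivIco (y := x), ← AddCircle.coe_equivIco (y := y), ← AddCircle.coe_sub,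
    ← sub_eq_zero, ← AddCircle.coe_sub, coe_eq_zero_iff_exists_int] at hu
  obtain ⟨n, hn⟩ := hu
  have h₀ : (0 : ℚ) < n := by rw [← hn]; linarith
  have h₁ : (n : ℚ) < 1 := by rw [← hn]; linarith
  have : 0 < n := by exact_mod_cast h₀
  have : n < 1 := by exact_mod_cast h₁
  omega

variable {ι κ : Type*}

lemma colSubgroup_le_ker_iff {G : Type*} [AddGroup G] (M : Matrix ι κ ℤ) (f : (ι → ℤ) →+ G) :
    colSubgroup M ≤ f.ker ↔ ∀ j, f (fun i => M i j) = 0 := by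
  simp only [colSubgroup, AddSubgroup.closure_le, range_subset_iff, SetLike.mem_coe,
    AddMonoidHom.mem_ker]

theorem SACG.colorable_three_of_character [DecidableEq ι] (M : Matrix ι κ ℤ)
    (χ : (ι → ℤ) →+ AddCircle (1 : ℚ)) (hχ : colSubgroup M ≤ χ.ker)
    (hmid : ∀ i, χ (Pi.single i 1) ∈ middleThird) : (SACG M).Colorable 3 := by
  set χ' := QuotientAddGroup.lift _ χ hχ
  refine ⟨SimpleGraph.Coloring.mk (fun x => third (χ' x)) fun {x y} hxy => ?_⟩
  obtain ⟨-, i, h | h⟩ := hxy <;> apply third_ne_of_sub_mem_middleThird <;> rw [← map_sub, h]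
  · simpa only [χ', QuotientAddGroup.lift_mk] using hmid i
  · simpa only [map_neg, χ', QuotientAddGroup.lift_mk] using neg_mem_middleThird (hmid i)

lemma exists_character_mem_middleThird {A : Type*} [AddCommGroup A] {H : AddSubgroup A} {a : A}
    (ha : a ∉ H) : ∃ χ : A →+ AddCircle (1 : ℚ), H ≤ χ.ker ∧ χ a ∈ middleThird := by
  obtain ⟨c, hc⟩ := CharacterModule.exists_character_apply_ne_zero_of_ne_zero
    (mt (QuotientAddGroup.eq_zero_iff a).1 ha)
  obtain ⟨m, hm⟩ := exists_zsmul_mem_middleThird hc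
  refine ⟨m • (c : A ⧸ H →+ AddCircle (1 : ℚ)).comp (QuotientAddGroup.mk' H), fun h hh => ?_, hm⟩
  change m • c (h : A ⧸ H) = 0
  rw [(QuotientAddGroup.eq_zero_iff h).2 hh, map_zero, smul_zero]

section dotHom

variable [Fintype ι]

def dotHom (w : ι → ℚ) : (ι → ℤ) →+ ℚ where
  toFun x := ∑ i, w i * x i
  map_zero' := by simp
  map_add' x y := by simp [mul_add, Finset.sum_add_distrib]

lemma dotHom_apply (w : ι → ℚ) (x : ι → ℤ) : dotHom w x = ∑ i, w i * x i := rfl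

lemma dotHom_single [DecidableEq ι] (w : ι → ℚ) (i : ι) : dotHom w (Pi.single i 1) = w i := by
  simp [dotHom_apply, Pi.single_apply]

lemma dotHom_smul (t : ℚ) (w : ι → ℚ) (x : ι → ℤ) : dotHom (t • w) x = t * dotHom w x := by
  simp [dotHom_apply, Finset.mul_sum, mul_assoc]

lemma exists_ne_zero_colSubgroup_le_ker_dotHom [Fintype κ] (M : Matrix ι κ ℤ)
    (h : Fintype.card κ < Fintype.card ι) :
    ∃ w : ι → ℚ, w ≠ 0 ∧ colSubgroup M ≤ (dotHom w).ker := by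
  obtain ⟨w, hw, hw0⟩ := (Submodule.ne_bot_iff _).1 <|
    LinearMap.ker_ne_bot_of_finrank_lt (f := (M.map (Int.cast : ℤ → ℚ)).vecMulLinear)
      (by simpa using h)
  refine ⟨w, hw0, (colSubgroup_le_ker_iff M _).2 fun j => ?_⟩
  simpa [Matrix.vecMul, dotProduct, dotHom_apply] using congrFun hw j

lemma exists_ne_ne_zero_of_colSubgroup_le_ker_dotHom [DecidableEq ι] {M : Matrix ι κ ℤ}
    {w : ι → ℚ} (hw0 : w ≠ 0) (hw : colSubgroup M ≤ (dotHom w).ker) {i₀ : ι}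
    (hrow : ∃ j, M i₀ j ≠ 0) : ∃ i ≠ i₀, w i ≠ 0 := by
  by_contra! h
  obtain ⟨j, hj⟩ := hrow
  have hwi₀ : w i₀ ≠ 0 := fun h₀ => hw0 (funext fun i => by by_cases hi : i = i₀ <;> simp_all)
  have hcol := (colSubgroup_le_ker_iff M _).1 hw j
  rw [dotHom_apply, Finset.sum_eq_single i₀ (fun i _ hi => by simp [h i hi]) (by simp)] at hcol
  simp_all

def dotChar (w : ι → ℚ) : (ι → ℤ) →+ AddCircle (1 : ℚ) :=
  (QuotientAddGroup.mk' _).comp (dotHom w)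

lemma dotChar_apply (w : ι → ℚ) (x : ι → ℤ) : dotChar w x = (dotHom w x : AddCircle (1 : ℚ)) :=
  rfl

variable {H : AddSubgroup (ι → ℤ)} {w : ι → ℚ}

lemma le_ker_dotChar_smul (hw : H ≤ (dotHom w).ker) (t : ℚ) : H ≤ (dotChar (t • w)).ker :=
  fun h hh => by
    rw [AddMonoidHom.mem_ker, dotChar_apply, dotHom_smul, AddMonoidHom.mem_ker.1 (hw hh), mul_zero,
      AddCircle.coe_zero]

variable [DecidableEq ι] {i i' : ι}

lemma exists_character_pair_mem_middleThird_of_ne_zero (hw : H ≤ (dotHom w).ker)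
    (hi : w i ≠ 0) (hi' : w i' ≠ 0) :
    ∃ χ : (ι → ℤ) →+ AddCircle (1 : ℚ), H ≤ χ.ker ∧
      χ (Pi.single i 1) ∈ middleThird ∧ χ (Pi.single i' 1) ∈ middleThird := by
  obtain ⟨t, ht, ht'⟩ := exists_mul_mem_middleThird hi hi'
  refine ⟨dotChar (t • w), le_ker_dotChar_smul hw t, ?_, ?_⟩ <;>
    rwa [dotChar_apply, dotHom_single, Pi.smul_apply, smul_eq_mul]

/-- A character lying in the middle third at `e i` is corrected at `e i'` by a multiple of
`dotChar w`, which does not move it at `e i`. -/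
lemma exists_character_pair_mem_middleThird_of_eq_zero (hw : H ≤ (dotHom w).ker)
    (hi : Pi.single i 1 ∉ H) (hwi : w i = 0) (hwi' : w i' ≠ 0) :
    ∃ χ : (ι → ℤ) →+ AddCircle (1 : ℚ), H ≤ χ.ker ∧
      χ (Pi.single i 1) ∈ middleThird ∧ χ (Pi.single i' 1) ∈ middleThird := by
  obtain ⟨χ, hχ, hχi⟩ := exists_character_mem_middleThird hi
  obtain ⟨r, hr⟩ := QuotientAddGroup.mk_surjective (χ (Pi.single i' 1))
  set t := (1 / 2 - r) / w i'
  refine ⟨χ + dotChar (t • w), fun h hh => ?_, ?_, ?_⟩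
  · rw [AddMonoidHom.mem_ker, AddMonoidHom.add_apply, hχ hh, le_ker_dotChar_smul hw t hh, add_zero]
  · simpa [dotChar_apply, dotHom_single, hwi] using hχi
  · simp only [AddMonoidHom.add_apply, dotChar_apply, dotHom_single, Pi.smul_apply, smul_eq_mul, t,
      div_mul_cancel₀ _ hwi', ← hr, ← AddCircle.coe_add, add_sub_cancel]
    exact ⟨1 / 2, ⟨by norm_num, by norm_num⟩, rfl⟩

lemma exists_character_pair_mem_middleThird (hw : H ≤ (dotHom w).ker)
    (hi : Pi.single i 1 ∉ H) (hi' : Pi.single i' 1 ∉ H) (hw' : w i ≠ 0 ∨ w i' ≠ 0) :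
    ∃ χ : (ι → ℤ) →+ AddCircle (1 : ℚ), H ≤ χ.ker ∧
      χ (Pi.single i 1) ∈ middleThird ∧ χ (Pi.single i' 1) ∈ middleThird := by
  by_cases hwi : w i = 0
  · exact exists_character_pair_mem_middleThird_of_eq_zero hw hi hwi (hw'.resolve_left (· hwi))
  by_cases hwi' : w i' = 0
  · obtain ⟨χ, hχ, h, h'⟩ := exists_character_pair_mem_middleThird_of_eq_zero hw hi' hwi' hwi
    exact ⟨χ, hχ, h', h⟩
  exact exists_character_pair_mem_middleThird_of_ne_zero hw hwi hwi'

/-- As `3` divides row `i₀`, the character `x ↦ j * x i₀ / 3` vanishes on the columns; adding it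
moves the value at `e i₀` by `j / 3` and no other value. -/
lemma exists_character_update_of_three_dvd {M : Matrix ι κ ℤ} {i₀ : ι} (h3 : ∀ j, 3 ∣ M i₀ j)
    {χ : (ι → ℤ) →+ AddCircle (1 : ℚ)} (hχ : colSubgroup M ≤ χ.ker) :
    ∃ χ' : (ι → ℤ) →+ AddCircle (1 : ℚ), colSubgroup M ≤ χ'.ker ∧
      χ' (Pi.single i₀ 1) ∈ middleThird ∧ ∀ i ≠ i₀, χ' (Pi.single i 1) = χ (Pi.single i 1) := by
  obtain ⟨j, hj⟩ := exists_add_intCast_div_three_mem_middleThird (χ (Pi.single i₀ 1))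
  refine ⟨χ + dotChar (Pi.single i₀ (j / 3)), (colSubgroup_le_ker_iff M _).2 fun c => ?_, ?_,
    fun i hi => ?_⟩
  · obtain ⟨k, hk⟩ := h3 c
    rw [AddMonoidHom.add_apply, (colSubgroup_le_ker_iff M χ).1 hχ c, zero_add, dotChar_apply,
      coe_eq_zero_iff_exists_int]
    exact ⟨j * k, by simp [dotHom_apply, Pi.single_apply, hk]; ring⟩
  · simpa [dotChar_apply, dotHom_single] using hj
  · simp [dotChar_apply, dotHom_single, hi]

end dotHom

theorem three_divisible_row_lemma (k₁ k₂ y21 y22 y31 y32 : ℤ)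
    (M : Matrix (Fin 3) (Fin 2) ℤ)
    (hMdef : M = !![3 * k₁, 3 * k₂; y21, y22; y31, y32])
    (hrows : ∀ i, ∃ j, M i j ≠ 0)
    (hloops : NoLoops M) :
    (SACG M).chromaticNumber ≤ 3 := by
  have h3 : ∀ j, 3 ∣ M 0 j := by
    subst hMdef
    intro j
    fin_cases j <;> simp
  obtain ⟨w, hw0, hw⟩ := exists_ne_zero_colSubgroup_le_ker_dotHom M (by simp)
  have hw12 : w 1 ≠ 0 ∨ w 2 ≠ 0 := by
    obtain ⟨i, hi, hwi⟩ := exists_ne_ne_zero_of_colSubgroup_le_ker_dotHom hw0 hw (hrows 0)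
    fin_cases i <;> simp_all
  obtain ⟨χ, hχ, h1, h2⟩ := exists_character_pair_mem_middleThird hw (hloops 1) (hloops 2) hw12
  obtain ⟨χ', hχ', h0, hχ'χ⟩ := exists_character_update_of_three_dvd h3 hχ
  refine (SACG.colorable_three_of_character M χ' hχ' fun i => ?_).chromaticNumber_le.trans (by simp)
  fin_cases i
  exacts [h0, hχ'χ 1 (by decide) ▸ h1, hχ'χ 2 (by decide) ▸ h2]
end
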